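/- Consider the discrete-time recursion D(τ+1) = (D(τ) − dB(τ)) + dL(τ) in ℝ_+^N, where D(0) = 0, each increment dL(τ) satisfies ρ(dL(τ)) ≤ 1, and dB(τ) ∈ S is chosen by the following rule: if D(τ) admits a nonnegative decomposition Σ_σ α_σ σ = D(τ) with Σ_σ α_σ = ρ(D(τ)) and α_{σ'} ≥ 1 for some σ' ∈ S, set dB(τ) = σ'; otherwise choose dB(τ) ∈ S maximizing Σ_i σ_i subject to σ ≤ D(τ). Then ρ(D(τ)) ≤ N + 2 for all τ ≥ 0, and consequently Σ_i D_i(τ) ≤ K(N+2) where K = max_{σ∈S} Σ_i σ_i. -/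

import Mathlib

/-!
The load `ρ` is attained (the feasible coefficients form a compact set once their total is
capped), and for `x ≥ 0` it is attained by an exact decomposition `∑ α_σ σ = x`: among optimal
covers take one minimising `∑ α_σ |σ|`; any excess in a coordinate could be removed by moving
weight to a smaller member of the downward-closed family `S`.

If an optimal exact decomposition of `D(τ)` has `α_{dB(τ)} ≥ 1`, removing `dB(τ)` lowers `ρ` by
one, so `ρ(D(τ+1)) ≤ ρ(D(τ))`. Otherwise Carathéodory's theorem, applied to `D(τ)/ρ(D(τ))`,
gives an optimal exact decomposition supported on at most `N + 1` vectors, all with coefficient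
`< 1`, so `ρ(D(τ)) ≤ N + 1` and subadditivity gives `ρ(D(τ+1)) ≤ N + 2`. Finally
`∑_i D_i ≤ ∑_σ α_σ |σ| ≤ K ρ(D)` for an optimal cover `α`.
-/

/-- The load `ρ(x)` induced by a nonnegative vector `x`: the infimum of `∑ α_σ` over
nonnegative coefficients `α` with `x ≤ ∑ α_σ σ` componentwise. -/
noncomputable def schedRho (N : ℕ) (S : Finset (Fin N → ℝ)) (x : Fin N → ℝ) : ℝ :=
  sInf {c : ℝ | ∃ α : (Fin N → ℝ) → ℝ, (∀ σ, 0 ≤ α σ) ∧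
    (∀ i, x i ≤ ∑ σ ∈ S, α σ * σ i) ∧ c = ∑ σ ∈ S, α σ}

theorem exists_subset_card_le_finrank_succ_sum_smul_eq {𝕜 E : Type*} [Field 𝕜] [LinearOrder 𝕜]
    [IsStrictOrderedRing 𝕜] [AddCommGroup E] [Module 𝕜 E] [FiniteDimensional 𝕜 E]
    {s : Finset E} {α : E → 𝕜} (hα : ∀ σ ∈ s, 0 ≤ α σ) :
    ∃ t ⊆ s, t.card ≤ Module.finrank 𝕜 E + 1 ∧ ∃ β : E → 𝕜, (∀ σ, 0 ≤ β σ) ∧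
      (∀ σ ∉ t, β σ = 0) ∧ ∑ σ ∈ s, β σ = ∑ σ ∈ s, α σ ∧
      ∑ σ ∈ s, β σ • σ = ∑ σ ∈ s, α σ • σ := by
  classical
  obtain hc | hc := (Finset.sum_nonneg hα).eq_or_lt
  · have hα0 : ∀ σ ∈ s, α σ = 0 := (Finset.sum_eq_zero_iff_of_nonneg hα).mp hc.symm
    refine ⟨∅, Finset.empty_subset s, by simp, fun _ => 0, fun _ => le_rfl, fun _ _ => rfl,
      by simpa using hc, ?_⟩
    simp only [zero_smul, Finset.sum_const_zero]
    exact (Finset.sum_eq_zero fun σ hσ => by rw [hα0 σ hσ, zero_smul]).symm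
  set c := ∑ σ ∈ s, α σ
  have hmem : c⁻¹ • ∑ σ ∈ s, α σ • σ ∈ convexHull 𝕜 (s : Set E) := by
    refine Finset.mem_convexHull'.mpr ⟨fun σ => c⁻¹ * α σ, fun σ hσ => ?_, ?_, ?_⟩
    · exact mul_nonneg (inv_nonneg.mpr hc.le) (hα σ hσ)
    · rw [← Finset.mul_sum, inv_mul_cancel₀ hc.ne']
    · simp only [Finset.smul_sum, smul_smul]
  rw [convexHull_eq_union] at hmem
  simp only [Set.mem_iUnion] at hmem
  obtain ⟨t, hts, hind, hmem⟩ := hmem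
  obtain ⟨w, hw0, hw1, hwx⟩ := Finset.mem_convexHull'.mp hmem
  have hts : t ⊆ s := by exact_mod_cast hts
  refine ⟨t, hts, ?_, fun σ => if σ ∈ t then c * w σ else 0, fun σ => ?_, fun σ hσ => if_neg hσ,
    ?_, ?_⟩
  · have := hind.card_le_finrank_succ
    have := Submodule.finrank_le (vectorSpan 𝕜 (Set.range ((↑) : t → E)))
    simp only [Fintype.card_coe] at *
    omega
  · dsimp only
    split_ifs with hσ
    · exact mul_nonneg hc.le (hw0 σ hσ)
    · exact le_rfl
  · rw [Finset.sum_ite_mem, Finset.inter_eq_right.mpr hts, ← Finset.mul_sum, hw1, mul_one]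
  · simp only [ite_smul, zero_smul, Finset.sum_ite_mem, Finset.inter_eq_right.mpr hts,
      mul_smul, ← Finset.smul_sum, hwx]
    exact smul_inv_smul₀ hc.ne' _

section FractionalCover

variable {N : ℕ} {S : Finset (Fin N → ℝ)}

theorem nonneg_of_eq_zero_or_eq_one (hS01 : ∀ σ ∈ S, ∀ i, σ i = 0 ∨ σ i = 1) :
    ∀ σ ∈ S, ∀ i, 0 ≤ σ i := fun σ hσ i => by
  rcases hS01 σ hσ i with h | h <;> simp [h]

def IsFractionalCover (S : Finset (Fin N → ℝ)) (x : Fin N → ℝ) (α : (Fin N → ℝ) → ℝ) : Prop :=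
  (∀ σ, 0 ≤ α σ) ∧ ∀ i, x i ≤ ∑ σ ∈ S, α σ * σ i

theorem schedRho_le_sum {x : Fin N → ℝ} {α : (Fin N → ℝ) → ℝ} (hα : IsFractionalCover S x α) :
    schedRho N S x ≤ ∑ σ ∈ S, α σ :=
  csInf_le ⟨0, by rintro _ ⟨β, hβ, -, rfl⟩; exact Finset.sum_nonneg fun σ _ => hβ σ⟩
    ⟨α, hα.1, hα.2, rfl⟩

theorem exists_isFractionalCover (hS : ∀ σ ∈ S, ∀ i, 0 ≤ σ i)
    (hunit : ∀ i : Fin N, (fun k => if k = i then (1 : ℝ) else 0) ∈ S) (x : Fin N → ℝ) :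
    ∃ α, IsFractionalCover S x α := by
  set c := ∑ j, |x j|
  have hc : 0 ≤ c := by positivity
  refine ⟨fun _ => c, fun _ => hc, fun i => ?_⟩
  calc x i ≤ c := (le_abs_self _).trans
        (Finset.single_le_sum (fun j _ => abs_nonneg (x j)) (Finset.mem_univ i))
    _ = c * (fun k => if k = i then (1 : ℝ) else 0) i := by simp
    _ ≤ ∑ σ ∈ S, c * σ i := Finset.single_le_sum (f := fun σ => c * σ i)
        (fun σ hσ => mul_nonneg hc (hS σ hσ i)) (hunit i)

theorem exists_isFractionalCover_isMinOn (w : (Fin N → ℝ) → ℝ) {x : Fin N → ℝ} {c : ℝ}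
    (h : ∃ α, IsFractionalCover S x α ∧ ∑ σ ∈ S, α σ ≤ c) :
    ∃ α, IsFractionalCover S x α ∧ ∑ σ ∈ S, α σ ≤ c ∧
      ∀ β, IsFractionalCover S x β → ∑ σ ∈ S, β σ ≤ c →
        ∑ σ ∈ S, α σ * w σ ≤ ∑ σ ∈ S, β σ * w σ := by
  classical
  -- capping every coefficient at `c` makes the feasible set compact in the product topology
  set K := {α : (Fin N → ℝ) → ℝ | (∀ σ, α σ ≤ c) ∧ IsFractionalCover S x α ∧
    ∑ σ ∈ S, α σ ≤ c}
  have hsum_cont : ∀ g : (Fin N → ℝ) → ℝ, Continuous fun α : (Fin N → ℝ) → ℝ =>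
      ∑ σ ∈ S, α σ * g σ := fun g => by fun_prop
  have hK : IsCompact K := by
    refine (isCompact_univ_pi fun _ => isCompact_Icc (a := 0) (b := c)).of_isClosed_subset ?_
      fun α hα σ _ => ⟨hα.2.1.1 σ, hα.1 σ⟩
    simp only [K, IsFractionalCover, Set.ofPred_and, Set.ofPred_forall]
    exact (isClosed_iInter fun σ => isClosed_le (continuous_apply σ) continuous_const).inter
      (((isClosed_iInter fun σ => isClosed_le continuous_const (continuous_apply σ)).inter
        (isClosed_iInter fun i => isClosed_le continuous_const (hsum_cont _))).inter
        (isClosed_le (continuous_finsetSum S fun σ _ => continuous_apply σ) continuous_const))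
  have hrestrict : ∀ β, IsFractionalCover S x β → ∑ σ ∈ S, β σ ≤ c →
      ∃ γ ∈ K, ∀ g : (Fin N → ℝ) → ℝ, ∑ σ ∈ S, γ σ * g σ = ∑ σ ∈ S, β σ * g σ := by
    intro β hβ hβc
    have hsum : ∀ g : (Fin N → ℝ) → ℝ,
        ∑ σ ∈ S, (if σ ∈ S then β σ else 0) * g σ = ∑ σ ∈ S, β σ * g σ :=
      fun g => Finset.sum_congr rfl fun σ hσ => by rw [if_pos hσ]
    refine ⟨fun σ => if σ ∈ S then β σ else 0, ⟨fun σ => ?_, ⟨fun σ => ?_, fun i => ?_⟩, ?_⟩, hsum⟩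
    · dsimp only
      split_ifs with hσ
      · exact (Finset.single_le_sum (fun σ _ => hβ.1 σ) hσ).trans hβc
      · exact (Finset.sum_nonneg fun σ _ => hβ.1 σ).trans hβc
    · dsimp only
      split_ifs
      exacts [hβ.1 σ, le_rfl]
    · rw [hsum]; exact hβ.2 i
    · simpa using (hsum fun _ => 1).trans_le (by simpa using hβc)
  obtain ⟨β, hβ, hβc⟩ := h
  obtain ⟨γ, hγK, -⟩ := hrestrict β hβ hβc
  obtain ⟨α, hαK, hαmin⟩ := hK.exists_isMinOn ⟨γ, hγK⟩ (hsum_cont w).continuousOn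
  refine ⟨α, hαK.2.1, hαK.2.2, fun β hβ hβc => ?_⟩
  obtain ⟨γ, hγK, hγ⟩ := hrestrict β hβ hβc
  exact (hαmin hγK).trans_eq (hγ w)

theorem exists_isFractionalCover_sum_eq_schedRho (hS : ∀ σ ∈ S, ∀ i, 0 ≤ σ i)
    (hunit : ∀ i : Fin N, (fun k => if k = i then (1 : ℝ) else 0) ∈ S) (x : Fin N → ℝ) :
    ∃ α, IsFractionalCover S x α ∧ ∑ σ ∈ S, α σ = schedRho N S x := by
  obtain ⟨α₀, hα₀⟩ := exists_isFractionalCover hS hunit x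
  obtain ⟨α, hα, hαc, hmin⟩ := exists_isFractionalCover_isMinOn (fun _ => 1) ⟨α₀, hα₀, le_rfl⟩
  simp only [mul_one] at hmin
  refine ⟨α, hα, le_antisymm (le_csInf ⟨_, α₀, hα₀.1, hα₀.2, rfl⟩ ?_) (schedRho_le_sum hα)⟩
  rintro _ ⟨β, hβ₀, hβ, rfl⟩
  rcases le_or_gt (∑ σ ∈ S, β σ) (∑ σ ∈ S, α₀ σ) with hβc | hβc
  · exact hmin β ⟨hβ₀, hβ⟩ hβc
  · exact hαc.trans hβc.le

theorem schedRho_add_le (hS : ∀ σ ∈ S, ∀ i, 0 ≤ σ i)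
    (hunit : ∀ i : Fin N, (fun k => if k = i then (1 : ℝ) else 0) ∈ S) (x y : Fin N → ℝ) :
    schedRho N S (x + y) ≤ schedRho N S x + schedRho N S y := by
  obtain ⟨α, hα, hαx⟩ := exists_isFractionalCover_sum_eq_schedRho hS hunit x
  obtain ⟨β, hβ, hβy⟩ := exists_isFractionalCover_sum_eq_schedRho hS hunit y
  rw [← hαx, ← hβy, ← Finset.sum_add_distrib]
  refine schedRho_le_sum ⟨fun σ => add_nonneg (hα.1 σ) (hβ.1 σ), fun i => ?_⟩
  simpa only [Pi.add_apply, add_mul, Finset.sum_add_distrib] using add_le_add (hα.2 i) (hβ.2 i)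

theorem schedRho_mono (hS : ∀ σ ∈ S, ∀ i, 0 ≤ σ i)
    (hunit : ∀ i : Fin N, (fun k => if k = i then (1 : ℝ) else 0) ∈ S) {x y : Fin N → ℝ}
    (hxy : x ≤ y) : schedRho N S x ≤ schedRho N S y := by
  obtain ⟨α, hα, hαy⟩ := exists_isFractionalCover_sum_eq_schedRho hS hunit y
  exact hαy ▸ schedRho_le_sum ⟨hα.1, fun i => (hxy i).trans (hα.2 i)⟩

theorem sum_add_ite_mul {τ : Fin N → ℝ} (hτ : τ ∈ S) (α g : (Fin N → ℝ) → ℝ) (ε : ℝ) :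
    ∑ σ ∈ S, (α σ + if σ = τ then ε else 0) * g σ = ∑ σ ∈ S, α σ * g σ + ε * g τ := by
  simp only [add_mul, ite_mul, zero_mul, Finset.sum_add_distrib, Finset.sum_ite_eq', if_pos hτ]

theorem schedRho_sub_le_sum_sub_one {x b : Fin N → ℝ} {α : (Fin N → ℝ) → ℝ}
    (hα : IsFractionalCover S x α) (hb : b ∈ S) (hαb : 1 ≤ α b) :
    schedRho N S (x - b) ≤ ∑ σ ∈ S, α σ - 1 := by
  have hsum := sum_add_ite_mul hb α
  have hα' : IsFractionalCover S (x - b) fun σ => α σ + if σ = b then -1 else 0 := by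
    refine ⟨fun σ => ?_, fun i => ?_⟩
    · dsimp only
      split_ifs with h
      · subst h; linarith
      · simpa using hα.1 σ
    · rw [hsum]; simpa [sub_eq_add_neg] using hα.2 i
  have htotal := hsum (fun _ => 1) (-1)
  simp only [mul_one] at htotal
  linarith [schedRho_le_sum hα']

/-- Move weight from some `σ₀` with `σ₀ i = 1` to `σ₀` with coordinate `i` removed. -/
theorem exists_isFractionalCover_sum_size_lt (hS01 : ∀ σ ∈ S, ∀ i, σ i = 0 ∨ σ i = 1)
    (hmono : ∀ σ ∈ S, ∀ σ' : Fin N → ℝ,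
      (∀ i, σ' i = 0 ∨ σ' i = 1) → (∀ i, σ' i ≤ σ i) → σ' ∈ S)
    {x : Fin N → ℝ} (hx : ∀ i, 0 ≤ x i) {α : (Fin N → ℝ) → ℝ} (hα : IsFractionalCover S x α)
    {i : Fin N} (hi : x i < ∑ σ ∈ S, α σ * σ i) :
    ∃ β, IsFractionalCover S x β ∧ ∑ σ ∈ S, β σ = ∑ σ ∈ S, α σ ∧
      ∑ σ ∈ S, β σ * ∑ j, σ j < ∑ σ ∈ S, α σ * ∑ j, σ j := by
  classical
  obtain ⟨σ₀, hσ₀, hσ₀i, hpos⟩ : ∃ σ₀ ∈ S, σ₀ i = 1 ∧ 0 < α σ₀ := by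
    by_contra! h
    have : ∑ σ ∈ S, α σ * σ i ≤ 0 := Finset.sum_nonpos fun σ hσ => by
      rcases hS01 σ hσ i with h' | h' <;> simp [h', h σ hσ]
    linarith [hx i]
  set σ₁ := Function.update σ₀ i 0
  have hσ₁ : σ₁ ∈ S := by
    refine hmono σ₀ hσ₀ σ₁ (fun j => ?_) (fun j => ?_) <;> rcases eq_or_ne j i with rfl | hj
    · simp [σ₁]
    · simpa [σ₁, hj] using hS01 σ₀ hσ₀ j
    · simp [σ₁, hσ₀i]
    · simp [σ₁, hj]
  have hsize : ∑ j, σ₁ j = ∑ j, σ₀ j - 1 := by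
    rw [Finset.sum_update_of_mem (Finset.mem_univ i),
      Finset.sum_eq_add_sum_sdiff_singleton_of_mem (Finset.mem_univ i) σ₀, hσ₀i]
    ring
  set ε := min (α σ₀) (∑ σ ∈ S, α σ * σ i - x i)
  have hε : 0 < ε := lt_min hpos (sub_pos.mpr hi)
  have hεα : ε ≤ α σ₀ := min_le_left _ _
  have hεx : ε ≤ ∑ σ ∈ S, α σ * σ i - x i := min_le_right _ _
  set β : (Fin N → ℝ) → ℝ := fun σ => (α σ + if σ = σ₀ then -ε else 0) + if σ = σ₁ then ε else 0
  have hβ : ∀ g : (Fin N → ℝ) → ℝ,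
      ∑ σ ∈ S, β σ * g σ = ∑ σ ∈ S, α σ * g σ + ε * (g σ₁ - g σ₀) := fun g => by
    rw [sum_add_ite_mul hσ₁, sum_add_ite_mul hσ₀]; ring
  refine ⟨β, ⟨fun σ => ?_, fun j => ?_⟩, by simpa using hβ fun _ => 1, ?_⟩
  · refine add_nonneg ?_ (by split_ifs <;> linarith)
    split_ifs with h
    · subst h; linarith
    · simpa using hα.1 σ
  · rw [hβ fun σ => σ j]
    rcases eq_or_ne j i with rfl | hj
    · simp only [σ₁, Function.update_self, hσ₀i]; linarith
    · simp only [σ₁, Function.update_of_ne hj, sub_self, mul_zero, add_zero]; exact hα.2 j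
  · rw [hβ, hsize]; linarith

theorem exists_decomp_sum_eq_schedRho (hS01 : ∀ σ ∈ S, ∀ i, σ i = 0 ∨ σ i = 1)
    (hmono : ∀ σ ∈ S, ∀ σ' : Fin N → ℝ,
      (∀ i, σ' i = 0 ∨ σ' i = 1) → (∀ i, σ' i ≤ σ i) → σ' ∈ S)
    (hunit : ∀ i : Fin N, (fun k => if k = i then (1 : ℝ) else 0) ∈ S)
    {x : Fin N → ℝ} (hx : ∀ i, 0 ≤ x i) :
    ∃ α : (Fin N → ℝ) → ℝ, (∀ σ, 0 ≤ α σ) ∧ (∀ i, ∑ σ ∈ S, α σ * σ i = x i) ∧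
      ∑ σ ∈ S, α σ = schedRho N S x := by
  have hS := nonneg_of_eq_zero_or_eq_one hS01
  obtain ⟨α₀, hα₀, hα₀x⟩ := exists_isFractionalCover_sum_eq_schedRho hS hunit x
  obtain ⟨α, hα, hαx, hmin⟩ :=
    exists_isFractionalCover_isMinOn (fun σ => ∑ j, σ j) ⟨α₀, hα₀, hα₀x.le⟩
  refine ⟨α, hα.1, fun i => ?_, le_antisymm hαx (schedRho_le_sum hα)⟩
  by_contra hne
  obtain ⟨β, hβ, hβα, hβsize⟩ := exists_isFractionalCover_sum_size_lt hS01 hmono hx hα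
    ((hα.2 i).lt_of_ne' hne)
  exact (hmin β hβ (hβα.trans_le hαx)).not_gt hβsize

theorem schedRho_le_of_forall_coeff_lt_one (hS01 : ∀ σ ∈ S, ∀ i, σ i = 0 ∨ σ i = 1)
    (hmono : ∀ σ ∈ S, ∀ σ' : Fin N → ℝ,
      (∀ i, σ' i = 0 ∨ σ' i = 1) → (∀ i, σ' i ≤ σ i) → σ' ∈ S)
    (hunit : ∀ i : Fin N, (fun k => if k = i then (1 : ℝ) else 0) ∈ S)
    {x : Fin N → ℝ} (hx : ∀ i, 0 ≤ x i)
    (hno : ¬ ∃ α : (Fin N → ℝ) → ℝ, (∀ σ, 0 ≤ α σ) ∧ (∀ i, ∑ σ ∈ S, α σ * σ i = x i) ∧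
      (∑ σ ∈ S, α σ = schedRho N S x) ∧ ∃ σ' ∈ S, 1 ≤ α σ') :
    schedRho N S x ≤ N + 1 := by
  obtain ⟨α, hα, hαx, hαρ⟩ := exists_decomp_sum_eq_schedRho hS01 hmono hunit hx
  obtain ⟨t, htS, ht, β, hβ, hβt, hβα, hβx⟩ :=
    exists_subset_card_le_finrank_succ_sum_smul_eq (s := S) fun σ _ => hα σ
  rw [Module.finrank_fin_fun] at ht
  have hβx : ∀ i, ∑ σ ∈ S, β σ * σ i = x i := fun i => by
    simpa [Finset.sum_apply, hαx] using congrFun hβx i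
  have hβ1 : ∀ σ ∈ S, β σ ≤ 1 := fun σ hσ =>
    (not_le.mp fun h => hno ⟨β, hβ, hβx, hβα.trans hαρ, σ, hσ, h⟩).le
  calc schedRho N S x = ∑ σ ∈ S, β σ := (hβα.trans hαρ).symm
    _ = ∑ σ ∈ t, β σ := (Finset.sum_subset htS fun σ _ hσ => hβt σ hσ).symm
    _ ≤ ∑ _σ ∈ t, 1 := Finset.sum_le_sum fun σ hσ => hβ1 σ (htS hσ)
    _ ≤ N + 1 := by simpa using (Nat.cast_le (α := ℝ)).mpr ht

theorem le_and_schedRho_sub_le_of_rule (hS01 : ∀ σ ∈ S, ∀ i, σ i = 0 ∨ σ i = 1)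
    (hmono : ∀ σ ∈ S, ∀ σ' : Fin N → ℝ,
      (∀ i, σ' i = 0 ∨ σ' i = 1) → (∀ i, σ' i ≤ σ i) → σ' ∈ S)
    (hunit : ∀ i : Fin N, (fun k => if k = i then (1 : ℝ) else 0) ∈ S)
    {x b : Fin N → ℝ} (hx : ∀ i, 0 ≤ x i) (hb : b ∈ S) (hρ : schedRho N S x ≤ N + 2)
    (hrule : (∃ α : (Fin N → ℝ) → ℝ, (∀ σ, 0 ≤ α σ) ∧ (∀ i, ∑ σ ∈ S, α σ * σ i = x i) ∧
          (∑ σ ∈ S, α σ = schedRho N S x) ∧ 1 ≤ α b)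
      ∨ ((¬ ∃ α : (Fin N → ℝ) → ℝ, (∀ σ, 0 ≤ α σ) ∧ (∀ i, ∑ σ ∈ S, α σ * σ i = x i) ∧
            (∑ σ ∈ S, α σ = schedRho N S x) ∧ ∃ σ' ∈ S, 1 ≤ α σ') ∧
          ∀ i, b i ≤ x i)) :
    (∀ i, b i ≤ x i) ∧ schedRho N S (x - b) ≤ N + 1 := by
  have hS := nonneg_of_eq_zero_or_eq_one hS01
  rcases hrule with ⟨α, hα, hαx, hαρ, hαb⟩ | ⟨hno, hbx⟩
  · refine ⟨fun i => ?_, ?_⟩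
    · calc b i ≤ α b * b i := le_mul_of_one_le_left (hS b hb i) hαb
        _ ≤ ∑ σ ∈ S, α σ * σ i := Finset.single_le_sum (f := fun σ => α σ * σ i)
            (fun σ hσ => mul_nonneg (hα σ) (hS σ hσ i)) hb
        _ = x i := hαx i
    · have := schedRho_sub_le_sum_sub_one ⟨hα, fun i => (hαx i).ge⟩ hb hαb
      linarith
  · refine ⟨hbx, (schedRho_mono hS hunit fun i => ?_).trans
      (schedRho_le_of_forall_coeff_lt_one hS01 hmono hunit hx hno)⟩
    simpa using hS b hb i

theorem sum_le_sup'_mul_schedRho (hS : ∀ σ ∈ S, ∀ i, 0 ≤ σ i)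
    (hunit : ∀ i : Fin N, (fun k => if k = i then (1 : ℝ) else 0) ∈ S) (hSne : S.Nonempty)
    (x : Fin N → ℝ) : ∑ i, x i ≤ (S.sup' hSne fun σ => ∑ i, σ i) * schedRho N S x := by
  obtain ⟨α, ⟨hα, hαx⟩, hαρ⟩ := exists_isFractionalCover_sum_eq_schedRho hS hunit x
  calc ∑ i, x i ≤ ∑ i, ∑ σ ∈ S, α σ * σ i := Finset.sum_le_sum fun i _ => hαx i
    _ = ∑ σ ∈ S, α σ * ∑ i, σ i := by rw [Finset.sum_comm]; simp only [Finset.mul_sum]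
    _ ≤ ∑ σ ∈ S, α σ * S.sup' hSne fun σ => ∑ i, σ i :=
        Finset.sum_le_sum fun σ hσ => mul_le_mul_of_nonneg_left (Finset.le_sup' _ hσ) (hα σ)
    _ = _ := by rw [← Finset.sum_mul, hαρ, mul_comm]

end FractionalCover

theorem stmt5_general (N : ℕ) (S : Finset (Fin N → ℝ)) (hSne : S.Nonempty)
    (hS01 : ∀ σ ∈ S, ∀ i, σ i = 0 ∨ σ i = 1)
    (hmono : ∀ σ ∈ S, ∀ σ' : Fin N → ℝ,
      (∀ i, σ' i = 0 ∨ σ' i = 1) → (∀ i, σ' i ≤ σ i) → σ' ∈ S)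
    (hunit : ∀ i : Fin N, (fun k => if k = i then (1 : ℝ) else 0) ∈ S)
    (D dB dL : ℕ → Fin N → ℝ)
    (hD0 : D 0 = 0)
    (hrec : ∀ τ, D (τ + 1) = D τ - dB τ + dL τ)
    (hdB : ∀ τ, dB τ ∈ S)
    (hdLnn : ∀ τ i, 0 ≤ dL τ i)
    (hdL : ∀ τ, schedRho N S (dL τ) ≤ 1)
    (hrule : ∀ τ,
      (∃ α : (Fin N → ℝ) → ℝ, (∀ σ, 0 ≤ α σ) ∧
          (∀ i, ∑ σ ∈ S, α σ * σ i = D τ i) ∧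
          (∑ σ ∈ S, α σ = schedRho N S (D τ)) ∧ 1 ≤ α (dB τ))
      ∨ ((¬ ∃ α : (Fin N → ℝ) → ℝ, (∀ σ, 0 ≤ α σ) ∧
            (∀ i, ∑ σ ∈ S, α σ * σ i = D τ i) ∧
            (∑ σ ∈ S, α σ = schedRho N S (D τ)) ∧ ∃ σ' ∈ S, 1 ≤ α σ') ∧
          (∀ i, dB τ i ≤ D τ i) ∧
          ∀ σ ∈ S, (∀ i, σ i ≤ D τ i) → ∑ i, σ i ≤ ∑ i, dB τ i)) :
    ∀ τ, schedRho N S (D τ) ≤ (N : ℝ) + 2 ∧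
      ∑ i, D τ i ≤ (S.sup' hSne fun σ => ∑ i, σ i) * ((N : ℝ) + 2) := by
  have hS := nonneg_of_eq_zero_or_eq_one hS01
  have hbound : ∀ τ, (∀ i, 0 ≤ D τ i) ∧ schedRho N S (D τ) ≤ N + 2 := by
    intro τ
    induction τ with
    | zero =>
      refine ⟨by simp [hD0], (schedRho_le_sum (α := 0) ⟨fun _ => le_rfl, by simp [hD0]⟩).trans ?_⟩
      simp only [Pi.zero_apply, Finset.sum_const_zero]
      positivity
    | succ τ ih =>
      obtain ⟨hle, hρ⟩ := le_and_schedRho_sub_le_of_rule hS01 hmono hunit ih.1 (hdB τ) ih.2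
        ((hrule τ).imp_right fun h => ⟨h.1, h.2.1⟩)
      rw [hrec τ]
      refine ⟨fun i => ?_, ?_⟩
      · simp only [Pi.add_apply, Pi.sub_apply]; linarith [hle i, hdLnn τ i]
      · linarith [schedRho_add_le hS hunit (D τ - dB τ) (dL τ), hdL τ]
  have hK : 0 ≤ S.sup' hSne fun σ => ∑ i, σ i := by
    obtain ⟨σ, hσ⟩ := id hSne
    exact (Finset.sum_nonneg fun i _ => hS σ hσ i).trans (Finset.le_sup' _ hσ)
  exact fun τ => ⟨(hbound τ).2, (sum_le_sup'_mul_schedRho hS hunit hSne (D τ)).trans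
    (mul_le_mul_of_nonneg_left (hbound τ).2 hK)⟩

theorem stmt5 (N : ℕ) (S : Finset (Fin N → ℝ)) (hSne : S.Nonempty)
    (hS01 : ∀ σ ∈ S, ∀ i, σ i = 0 ∨ σ i = 1)
    (hmono : ∀ σ ∈ S, ∀ σ' : Fin N → ℝ,
      (∀ i, σ' i = 0 ∨ σ' i = 1) → (∀ i, σ' i ≤ σ i) → σ' ∈ S)
    (hunit : ∀ i : Fin N, (fun k => if k = i then (1 : ℝ) else 0) ∈ S)
    (hzero : (0 : Fin N → ℝ) ∈ S)
    (D dB dL : ℕ → Fin N → ℝ)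
    (hD0 : D 0 = 0)
    (hrec : ∀ τ, D (τ + 1) = D τ - dB τ + dL τ)
    (hdB : ∀ τ, dB τ ∈ S)
    (hdLnn : ∀ τ i, 0 ≤ dL τ i)
    (hdL : ∀ τ, schedRho N S (dL τ) ≤ 1)
    (hrule : ∀ τ,
      (∃ α : (Fin N → ℝ) → ℝ, (∀ σ, 0 ≤ α σ) ∧
          (∀ i, ∑ σ ∈ S, α σ * σ i = D τ i) ∧
          (∑ σ ∈ S, α σ = schedRho N S (D τ)) ∧ 1 ≤ α (dB τ))
      ∨ ((¬ ∃ α : (Fin N → ℝ) → ℝ, (∀ σ, 0 ≤ α σ) ∧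
            (∀ i, ∑ σ ∈ S, α σ * σ i = D τ i) ∧
            (∑ σ ∈ S, α σ = schedRho N S (D τ)) ∧ ∃ σ' ∈ S, 1 ≤ α σ') ∧
          (∀ i, dB τ i ≤ D τ i) ∧
          ∀ σ ∈ S, (∀ i, σ i ≤ D τ i) → ∑ i, σ i ≤ ∑ i, dB τ i)) :
    ∀ τ, schedRho N S (D τ) ≤ (N : ℝ) + 2 ∧
      ∑ i, D τ i ≤ (S.sup' hSne fun σ => ∑ i, σ i) * ((N : ℝ) + 2) :=
  stmt5_general N S hSne hS01 hmono hunit D dB dL hD0 hrec hdB hdLnn hdL hrule
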